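/- Let T and T' be ŵ_p-shortest path trees and for each priceable edge e_i let V_T(e_i,p) be the set of vertices v such that e_i is the last priceable edge on T[r,v]. Then V_T(e_i,p) = V_{T'}(e_i,p) for every i. -/

import Mathlib

/-- A directed graph: a type of edges with source and target maps. -/
structure Dgraph (V : Type) (E : Type) where
  src : E → V
  tgt : E → V

/-- `IsWalk G u v π`: the list of edges `π` forms a walk from `u` to `v` in `G`. -/
def IsWalk {V E : Type} (G : Dgraph V E) : V → V → List E → Prop
  | u, v, [] => u = v
  | u, v, e :: es => G.src e = u ∧ IsWalk G (G.tgt e) v es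

/-- A path is a walk without repeated edges. -/
def IsPath {V E : Type} (G : Dgraph V E) (u v : V) (π : List E) : Prop :=
  IsWalk G u v π ∧ π.Nodup

/-- Total weight of a list of edges under the weight function `w`. -/
def wval {E : Type} (w : E → ℝ) (π : List E) : ℝ := (π.map w).sum

/-- Total price of the priceable edges (those in `EP`) along `π`. -/
def pval {E : Type} [DecidableEq E] (p : E → ℝ) (EP : Finset E) (π : List E) : ℝ :=
  ((π.filter (· ∈ EP)).map p).sum

/-- `χ(π) = Σ_{e_i ∈ π ∩ E_P} 2^{idx e_i}`. -/
def chival {E : Type} [DecidableEq E] (EP : Finset E) (idx : E → ℕ) (π : List E) : ℝ :=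
  ((π.filter (· ∈ EP)).map (fun e => (2 : ℝ) ^ idx e)).sum

/-- The weight function `w_p`: price `p e` on priceable edges, fixed cost `c e` otherwise. -/
def wp {E : Type} [DecidableEq E] (c p : E → ℝ) (EP : Finset E) (e : E) : ℝ :=
  if e ∈ EP then p e else c e

/-- Strict lexicographic order on `ℝ × ℝ × ℝ`. -/
def lexLt (a b : ℝ × ℝ × ℝ) : Prop :=
  a.1 < b.1 ∨ (a.1 = b.1 ∧ (a.2.1 < b.2.1 ∨ (a.2.1 = b.2.1 ∧ a.2.2 < b.2.2)))

/-- Non-strict lexicographic order on `ℝ × ℝ × ℝ`. -/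
def lexLe (a b : ℝ × ℝ × ℝ) : Prop := lexLt a b ∨ a = b

/-- The composite weight `ŵ_p(π) = (w_p(π), -p(π), -χ(π))`. -/
def hatw {E : Type} [DecidableEq E] (c p : E → ℝ) (EP : Finset E) (idx : E → ℕ)
    (π : List E) : ℝ × ℝ × ℝ :=
  (wval (wp c p EP) π, -(pval p EP π), -(chival EP idx π))

/-- `T` is a `ŵ_p`-shortest path tree from `r`: for every vertex `v`, `T v` is a path from
`r` to `v` that is lexicographically minimal with respect to `ŵ_p` among all such paths. -/
def IsHatSPT {V E : Type} [DecidableEq E] (G : Dgraph V E) (r : V)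
    (c p : E → ℝ) (EP : Finset E) (idx : E → ℕ) (T : V → List E) : Prop :=
  ∀ v, IsPath G r v (T v) ∧
    ∀ π, IsPath G r v π → lexLe (hatw c p EP idx (T v)) (hatw c p EP idx π)

/-- `T` is a shortest path tree from `r` with respect to `w_p`. -/
def IsSPT {V E : Type} [DecidableEq E] (G : Dgraph V E) (r : V)
    (c p : E → ℝ) (EP : Finset E) (T : V → List E) : Prop :=
  ∀ v, IsPath G r v (T v) ∧
    ∀ π, IsPath G r v π → wval (wp c p EP) (T v) ≤ wval (wp c p EP) π

/-- The last priceable edge along `π` (if any). -/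
def lastP {E : Type} [DecidableEq E] (EP : Finset E) (π : List E) : Option E :=
  (π.filter (· ∈ EP)).getLast?

/-!
Fix `v` and let `π = T[r,v]`, `π' = T'[r,v]`. Both are `ŵ_p`-minimal, so `ŵ_p(π) = ŵ_p(π')`.
Since `χ` writes the set of priceable edges of a path in binary, `π` and `π'` contain the same
priceable edges. Suppose their last priceable edges `a` (on `π`) and `b ≠ a` (on `π'`) differ.
Then `b` precedes `a` on `π` and `a` precedes `b` on `π'`; exchanging the suffixes after `a`
yields two `r`–`v` walks of total weight `w_p(π) + w_p(π')`, one of which traverses `b` twice.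
Shortcutting walks to paths only lowers the (positive) weight, strictly so for the walk that
repeats `b`, so the total exceeds `2 w_p(π)`: a contradiction.
-/

theorem lexLe_antisymm {x y : ℝ × ℝ × ℝ} (hxy : lexLe x y) (hyx : lexLe y x) : x = y := by
  rcases hxy with hxy | rfl
  · rcases hyx with hyx | rfl
    · unfold lexLt at hxy hyx
      rcases hxy with h | ⟨h₁, h | ⟨h₂, h⟩⟩ <;> rcases hyx with h' | ⟨h₁', h' | ⟨h₂', h'⟩⟩ <;>
        linarith
    · rfl
  · rfl

theorem lexLe.fst_le {x y : ℝ × ℝ × ℝ} (h : lexLe x y) : x.1 ≤ y.1 := by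
  rcases h with (h | ⟨h, -⟩) | rfl
  exacts [h.le, h.le, le_rfl]

section Walks

variable {V E : Type} {G : Dgraph V E}

theorem isWalk_append {u v : V} {A B : List E} :
    IsWalk G u v (A ++ B) ↔ ∃ m, IsWalk G u m A ∧ IsWalk G m v B := by
  induction A generalizing u with
  | nil => exact ⟨fun h => ⟨u, rfl, h⟩, fun ⟨_, hA, hB⟩ => hA ▸ hB⟩
  | cons e A ih =>
    simp only [List.cons_append, IsWalk, ih]
    exact ⟨fun ⟨hs, m, hA, hB⟩ => ⟨m, ⟨hs, hA⟩, hB⟩, fun ⟨m, ⟨hs, hA⟩, hB⟩ => ⟨hs, m, hA, hB⟩⟩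

theorem isWalk_append_cons {u v : V} {A B : List E} {e : E} :
    IsWalk G u v (A ++ e :: B) ↔ IsWalk G u (G.src e) A ∧ IsWalk G (G.tgt e) v B := by
  simp only [isWalk_append, IsWalk]
  exact ⟨fun ⟨_, hA, hs, hB⟩ => ⟨hs ▸ hA, hB⟩, fun ⟨hA, hB⟩ => ⟨_, hA, rfl, hB⟩⟩

theorem List.exists_eq_append_cons_append_cons_of_not_nodup {α : Type*} {l : List α}
    (h : ¬ l.Nodup) : ∃ A a B C, l = A ++ a :: (B ++ a :: C) := by
  obtain ⟨a, ha⟩ : ∃ a, List.Sublist [a, a] l := by simpa [List.nodup_iff_sublist] using h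
  obtain ⟨l₁, l₂, rfl, ha₁, ha₂⟩ := List.cons_sublist_iff.1 ha
  obtain ⟨A, B, rfl⟩ := List.append_of_mem ha₁
  obtain ⟨B', C, rfl⟩ := List.append_of_mem (List.singleton_sublist.1 ha₂)
  exact ⟨A, a, B ++ B', C, by simp⟩

variable {w : E → ℝ}

theorem wval_cons (e : E) (l : List E) : wval w (e :: l) = w e + wval w l := by
  simp [wval]

theorem wval_append (A B : List E) : wval w (A ++ B) = wval w A + wval w B := by
  simp [wval]

theorem wval_nonneg (hw : ∀ e, 0 < w e) (l : List E) : 0 ≤ wval w l :=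
  List.sum_nonneg fun _ hx => by
    obtain ⟨e, _, rfl⟩ := List.mem_map.1 hx
    exact (hw e).le

theorem IsWalk.exists_isPath_wval_le (hw : ∀ e, 0 < w e) {u v : V} {π : List E}
    (h : IsWalk G u v π) :
    ∃ π', IsPath G u v π' ∧ wval w π' ≤ wval w π ∧ (¬ π.Nodup → wval w π' < wval w π) := by
  induction hn : π.length using Nat.strong_induction_on generalizing π with
  | _ n ih =>
  by_cases hnd : π.Nodup
  · exact ⟨π, ⟨h, hnd⟩, le_rfl, absurd hnd⟩
  obtain ⟨A, a, B, C, rfl⟩ := List.exists_eq_append_cons_append_cons_of_not_nodup hnd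
  have hshort : IsWalk G u v (A ++ a :: C) := by
    rw [isWalk_append_cons, isWalk_append_cons] at h
    exact isWalk_append_cons.2 ⟨h.1, h.2.2⟩
  have hlt : wval w (A ++ a :: C) < wval w (A ++ a :: (B ++ a :: C)) := by
    simp only [wval_append, wval_cons]
    linarith [wval_nonneg hw B, hw a]
  obtain ⟨π', hπ', hle, -⟩ := ih _ (by simp [← hn]) hshort rfl
  exact ⟨π', hπ', (hle.trans_lt hlt).le, fun _ => hle.trans_lt hlt⟩

section Minimal

variable {u v : V} {π τ : List E}

theorem wval_le_of_isWalk (hw : ∀ e, 0 < w e)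
    (hmin : ∀ τ, IsPath G u v τ → wval w π ≤ wval w τ) (hτ : IsWalk G u v τ) :
    wval w π ≤ wval w τ := by
  obtain ⟨τ', hτ', hle, -⟩ := hτ.exists_isPath_wval_le hw
  exact (hmin τ' hτ').trans hle

theorem wval_lt_of_isWalk_of_not_nodup (hw : ∀ e, 0 < w e)
    (hmin : ∀ τ, IsPath G u v τ → wval w π ≤ wval w τ) (hτ : IsWalk G u v τ) (hnd : ¬ τ.Nodup) :
    wval w π < wval w τ := by
  obtain ⟨τ', hτ', -, hlt⟩ := hτ.exists_isPath_wval_le hw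
  exact (hmin τ' hτ').trans_lt (hlt hnd)

end Minimal

/-- Exchanging the suffixes after `a` gives the walks `ρ ++ a :: (Y ++ b :: σ')`, which repeats
`b`, and `X ++ a :: σ`, of the same total weight as the two given ones. -/
theorem wval_lt_of_mem_prefix (hw : ∀ e, 0 < w e) {u v : V} {ρ σ X Y σ' : List E} {a b : E}
    (hmin : ∀ τ, IsPath G u v τ → wval w (ρ ++ a :: σ) ≤ wval w τ)
    (hπ : IsWalk G u v (ρ ++ a :: σ)) (hπ' : IsWalk G u v (X ++ a :: (Y ++ b :: σ')))
    (hb : b ∈ ρ) :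
    wval w (ρ ++ a :: σ) < wval w (X ++ a :: (Y ++ b :: σ')) := by
  rw [isWalk_append_cons] at hπ hπ'
  have hrepeat : ¬ (ρ ++ a :: (Y ++ b :: σ')).Nodup := fun hnd =>
    List.disjoint_of_nodup_append hnd hb (by simp)
  have h₁ := wval_lt_of_isWalk_of_not_nodup hw hmin (isWalk_append_cons.2 ⟨hπ.1, hπ'.2⟩) hrepeat
  have h₂ := wval_le_of_isWalk hw hmin (τ := X ++ a :: σ) (isWalk_append_cons.2 ⟨hπ'.1, hπ.2⟩)
  simp only [wval_append, wval_cons] at h₁ h₂ ⊢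
  linarith

end Walks

theorem mem_of_mem_append_cons {E : Type} {EP : Finset E} {ρ σ : List E} {a x : E}
    (hσ : ∀ e ∈ σ, e ∉ EP) (hx : x ∈ ρ ++ a :: σ) (hxEP : x ∈ EP) (hxa : x ≠ a) : x ∈ ρ := by
  simp only [List.mem_append, List.mem_cons] at hx
  rcases hx with hx | rfl | hx
  exacts [hx, absurd rfl hxa, absurd hxEP (hσ x hx)]

section Priceable

variable {E : Type} [DecidableEq E] {EP : Finset E} {idx : E → ℕ}

theorem wp_pos {c p : E → ℝ} (hc : ∀ e ∉ EP, 0 < c e) (hp : ∀ e ∈ EP, 0 < p e) (e : E) :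
    0 < wp c p EP e := by
  unfold wp
  split_ifs with he
  exacts [hp e he, hc e he]

theorem chival_eq_sum_two_pow (hidx : Set.InjOn idx EP) {π : List E} (hπ : π.Nodup) :
    chival EP idx π = ∑ n ∈ ((π.filter (· ∈ EP)).map idx).toFinset, (2 : ℝ) ^ n := by
  have hnd : ((π.filter (· ∈ EP)).map idx).Nodup :=
    (hπ.filter _).map_on fun x hx y hy => hidx (by simpa using (List.mem_filter.1 hx).2)
      (by simpa using (List.mem_filter.1 hy).2)
  rw [List.sum_toFinset _ hnd, chival, List.map_map]
  rfl

theorem idx_mem_toFinset_iff (hidx : Set.InjOn idx EP) (π : List E) {e : E} (he : e ∈ EP) :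
    idx e ∈ ((π.filter (· ∈ EP)).map idx).toFinset ↔ e ∈ π := by
  simp only [List.mem_toFinset, List.mem_map, List.mem_filter, decide_eq_true_eq]
  exact ⟨fun ⟨e', ⟨he'π, he'⟩, hidx'⟩ => hidx he' he hidx' ▸ he'π, fun h => ⟨e, ⟨h, he⟩, rfl⟩⟩

theorem mem_iff_mem_of_chival_eq (hidx : Set.InjOn idx EP) {π π' : List E}
    (hπ : π.Nodup) (hπ' : π'.Nodup) (h : chival EP idx π = chival EP idx π')
    {e : E} (he : e ∈ EP) : e ∈ π ↔ e ∈ π' := by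
  have hS : ((π.filter (· ∈ EP)).map idx).toFinset = ((π'.filter (· ∈ EP)).map idx).toFinset :=
    Finset.geomSum_injective le_rfl <| by
      exact_mod_cast (chival_eq_sum_two_pow hidx hπ).symm.trans
        (h.trans (chival_eq_sum_two_pow hidx hπ'))
  rw [← idx_mem_toFinset_iff hidx π he, hS, idx_mem_toFinset_iff hidx π' he]

theorem exists_eq_append_cons_of_lastP_eq_some {π : List E} {a : E}
    (h : lastP EP π = some a) : ∃ ρ σ, π = ρ ++ a :: σ ∧ a ∈ EP ∧ ∀ e ∈ σ, e ∉ EP := by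
  obtain ⟨ys, hys⟩ := List.getLast?_eq_some_iff.1 h
  obtain ⟨l₁, l₂, rfl, -, hl₂⟩ := List.filter_eq_append_iff.1 hys
  obtain ⟨m₁, m₂, rfl, -, ha, hm₂⟩ := List.filter_eq_cons_iff.1 hl₂
  exact ⟨l₁ ++ m₁, m₂, by simp, by simpa using ha, by simpa using hm₂⟩

end Priceable

theorem lastP_eq_some_of_hatw_minimal {V E : Type} [DecidableEq E] {G : Dgraph V E} {r v : V}
    {EP : Finset E} {c p : E → ℝ} {idx : E → ℕ}
    (hc : ∀ e ∉ EP, 0 < c e) (hp : ∀ e ∈ EP, 0 < p e) (hidx : Set.InjOn idx EP)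
    {π π' : List E} (hπ : IsPath G r v π) (hπ' : IsPath G r v π')
    (hmin : ∀ τ, IsPath G r v τ → lexLe (hatw c p EP idx π) (hatw c p EP idx τ))
    (hmin' : ∀ τ, IsPath G r v τ → lexLe (hatw c p EP idx π') (hatw c p EP idx τ))
    {a : E} (ha : lastP EP π = some a) : lastP EP π' = some a := by
  have heq : hatw c p EP idx π = hatw c p EP idx π' :=
    lexLe_antisymm (hmin _ hπ') (hmin' _ hπ)
  have hmem : ∀ e ∈ EP, e ∈ π ↔ e ∈ π' := fun e he =>
    mem_iff_mem_of_chival_eq hidx hπ.2 hπ'.2 (by simpa [hatw] using congrArg (·.2.2) heq) he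
  obtain ⟨ρ, σ, rfl, haEP, hσ⟩ := exists_eq_append_cons_of_lastP_eq_some ha
  obtain ⟨b, hb⟩ : ∃ b, lastP EP π' = some b := by
    refine Option.ne_none_iff_exists'.1 fun hnone => ?_
    have ha' : a ∈ π'.filter (· ∈ EP) := by simp [← hmem a haEP, haEP]
    simp_all [lastP]
  obtain ⟨ρ', σ', rfl, hbEP, hσ'⟩ := exists_eq_append_cons_of_lastP_eq_some hb
  rw [hb, Option.some_inj]
  by_contra hba
  have hbρ : b ∈ ρ := mem_of_mem_append_cons hσ ((hmem b hbEP).2 (by simp)) hbEP hba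
  obtain ⟨X, Y, rfl⟩ := List.append_of_mem <|
    mem_of_mem_append_cons hσ' ((hmem a haEP).1 (by simp)) haEP (Ne.symm hba)
  have hlt := wval_lt_of_mem_prefix (wp_pos hc hp) (fun τ hτ => (hmin τ hτ).fst_le) hπ.1
    (by simpa using hπ'.1) hbρ
  have hweq : wval (wp c p EP) (ρ ++ a :: σ) = wval (wp c p EP) (X ++ a :: Y ++ b :: σ') :=
    congrArg Prod.fst heq
  simp only [wval_append, wval_cons] at hlt hweq
  linarith

theorem stmt_6_general {V E : Type} [DecidableEq E]
    (G : Dgraph V E) (r : V) (EP : Finset E) (c p : E → ℝ) (idx : E → ℕ)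
    (hc : ∀ e ∉ EP, 0 < c e) (hp : ∀ e ∈ EP, 0 < p e)
    (hidx : ∀ e ∈ EP, ∀ e' ∈ EP, idx e = idx e' → e = e')
    (k : ℕ) (pe : Fin k → E)
    (T T' : V → List E)
    (hT : IsHatSPT G r c p EP idx T) (hT' : IsHatSPT G r c p EP idx T') :
    ∀ i : Fin k,
      {v : V | lastP EP (T v) = some (pe i)} = {v : V | lastP EP (T' v) = some (pe i)} := by
  have hinj : Set.InjOn idx EP := fun e he e' he' => hidx e he e' he'
  intro i
  ext v
  exact ⟨lastP_eq_some_of_hatw_minimal hc hp hinj (hT v).1 (hT' v).1 (hT v).2 (hT' v).2,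
    lastP_eq_some_of_hatw_minimal hc hp hinj (hT' v).1 (hT v).1 (hT' v).2 (hT v).2⟩

/-- If `T` and `T'` are both `ŵ_p`-shortest path trees from `r` then, for every priceable
edge `e_i`, the set `V_T(e_i,p)` of vertices `v` such that `e_i` is the last priceable edge
on `T[r,v]` equals `V_{T'}(e_i,p)`. -/
theorem stmt_6 {V E : Type} [DecidableEq E]
    (G : Dgraph V E) (r : V) (EP : Finset E) (c p : E → ℝ) (idx : E → ℕ)
    (hc : ∀ e ∉ EP, 0 < c e) (hp : ∀ e ∈ EP, 0 < p e)
    (hidx : ∀ e ∈ EP, ∀ e' ∈ EP, idx e = idx e' → e = e')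
    (k : ℕ) (pe : Fin k → E) (hpe_inj : Function.Injective pe)
    (hpe_mem : ∀ i, pe i ∈ EP)
    (T T' : V → List E)
    (hT : IsHatSPT G r c p EP idx T) (hT' : IsHatSPT G r c p EP idx T') :
    ∀ i : Fin k,
      {v : V | lastP EP (T v) = some (pe i)} = {v : V | lastP EP (T' v) = some (pe i)} :=
  stmt_6_general G r EP c p idx hc hp hidx k pe T T' hT hT'
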